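/- Let {φ_k}_{k∈ℕ} be an orthonormal basis of L²([0,1]), let C ≥ 1 and D ≥ 1, and let s_1,…,s_D ∈ L²([0,1]^C). For every ε > 0 there exist K ∈ ℕ, a rank R ≤ K^{C−1}·min{K, D}, factor matrices U^{(1)},…,U^{(C)} ∈ ℝ^{K×R}, and V ∈ ℝ^{D×R}, such that the FUTON function s^futon, defined componentwise by s^futon_d(x) = Σ_{r=1}^R V_{d,r} ∏_{c=1}^C (Σ_{k=0}^{K−1} U^{(c)}_{k,r} φ_k(x_c)) for x ∈ [0,1]^C, satisfies ‖s_d − s^futon_d‖_{L²([0,1]^C)} < ε for every d ∈ {1,…,D}. -/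

import Mathlib

/-!
The tensor product is a bounded multilinear map `L²([0,1])^C → L²([0,1]^C)`, so tensors of
elements of the dense span of the `φ_k` approximate every tensor `f_1 ⊗ ⋯ ⊗ f_C`; these include
the monomials, and polynomials are dense in `L²([0,1]^C)` by Stone–Weierstrass. Each `s_d` is
therefore close to a finite combination `∑_κ T_{d,κ} φ_{κ_1} ⊗ ⋯ ⊗ φ_{κ_C}` with all indices
below a common `K ≥ D`. Slicing `T` along the first mode shows that it has CP rank at most
`K^{C-1} D`, which is exactly the FUTON form.
-/

open MeasureTheory Set Filter
open scoped ENNReal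

section CPDecomposition

variable {R ι κ ρ δ : Type*} [CommSemiring R] [Fintype ι] [Fintype ρ]

-- The coefficient of `φ_{k_1} ⊗ ⋯ ⊗ φ_{k_C}` in the `d`-th output of a FUTON function.
def cpTensor (U : ι → κ → ρ → R) (V : δ → ρ → R) (d : δ) (k : ι → κ) : R :=
  ∑ r, V d r * ∏ i, U i (k i) r

theorem sum_mul_prod_sum_eq_sum_cpTensor_mul [DecidableEq ι] [Fintype κ] (U : ι → κ → ρ → R)
    (V : δ → ρ → R) (ψ : ι → κ → R) (d : δ) :
    ∑ r, V d r * ∏ i, ∑ k, U i k r * ψ i k = ∑ k : ι → κ, cpTensor U V d k * ∏ i, ψ i (k i) := by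
  simp_rw [Fintype.prod_sum, Finset.prod_mul_distrib, cpTensor, Finset.mul_sum, Finset.sum_mul]
  exact Finset.sum_comm.trans (by simp_rw [mul_assoc])

theorem cpTensor_comp_equiv {ρ' : Type*} [Fintype ρ'] (e : ρ' ≃ ρ) (U : ι → κ → ρ → R)
    (V : δ → ρ → R) :
    cpTensor (fun i k r => U i k (e r)) (fun d r => V d (e r)) = cpTensor U V :=
  funext₂ fun d k => e.sum_comp fun r => V d r * ∏ i, U i (k i) r

theorem exists_cpTensor_eq {n : ℕ} [Fintype κ] [Fintype δ] (T : δ → (Fin (n + 1) → κ) → R) :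
    ∃ (U : Fin (n + 1) → κ → (Fin n → κ) × δ → R) (V : δ → (Fin n → κ) × δ → R),
      cpTensor U V = T := by
  classical
  -- For the rank index `r = (m, d')`, the first factor is the slice `T d' (Fin.cons · m)` and the
  -- remaining factors are the indicators of `m`.
  refine ⟨fun c k r => Fin.cases (T r.2 (Fin.cons k r.1)) (fun i => if r.1 i = k then 1 else 0) c,
    fun d r => if r.2 = d then 1 else 0, funext₂ fun d k => ?_⟩
  induction k using Fin.consCases
  simp [cpTensor, Fin.prod_univ_succ, Fintype.sum_prod_type, Finset.prod_boole, ← funext_iff]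

theorem exists_sum_mul_prod_sum_eq_sum_mul_prod {n : ℕ} [Fintype κ] [Fintype δ]
    (T : δ → (Fin (n + 1) → κ) → R) :
    ∃ (U : Fin (n + 1) → κ → Fin (Fintype.card κ ^ n * Fintype.card δ) → R)
      (V : δ → Fin (Fintype.card κ ^ n * Fintype.card δ) → R),
      ∀ d (ψ : Fin (n + 1) → κ → R), ∑ r, V d r * ∏ c, ∑ k, U c k r * ψ c k =
        ∑ k : Fin (n + 1) → κ, T d k * ∏ c, ψ c (k c) := by
  obtain ⟨U, V, hUV⟩ := exists_cpTensor_eq T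
  let e := (Fintype.equivFinOfCardEq (by simp : Fintype.card ((Fin n → κ) × δ) =
    Fintype.card κ ^ n * Fintype.card δ)).symm
  refine ⟨fun c k r => U c k (e r), fun d r => V d (e r), fun d ψ => ?_⟩
  rw [sum_mul_prod_sum_eq_sum_cpTensor_mul (fun c k r => U c k (e r)) (fun d r => V d (e r)),
    cpTensor_comp_equiv e U V, hUV]

theorem MultilinearMap.map_mem_span_range {R ι M : Type*} {E : ι → Type*} [CommSemiring R]
    [Fintype ι] [∀ i, AddCommMonoid (E i)] [∀ i, Module R (E i)]
    [AddCommMonoid M] [Module R M] (f : MultilinearMap R E M) {κ : ι → Type*}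
    (v : ∀ i, κ i → E i) {x : ∀ i, E i} (hx : ∀ i, x i ∈ Submodule.span R (Set.range (v i))) :
    f x ∈ Submodule.span R (Set.range fun k : ∀ i, κ i => f fun i => v i (k i)) := by
  classical
  choose c hc using fun i => Finsupp.mem_span_range_iff_exists_finsupp.1 (hx i)
  have hx' : x = fun i => ∑ k ∈ (c i).support, c i k • v i k := funext fun i => (hc i).symm
  rw [hx', f.map_sum_finset]
  refine sum_mem fun k _ => ?_
  rw [f.map_smul_univ]
  exact Submodule.smul_mem _ _ (Submodule.subset_span ⟨k, rfl⟩)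

theorem ContinuousMultilinearMap.map_mem_closure_span_range {𝕜 ι F : Type*} {E : ι → Type*}
    [NontriviallyNormedField 𝕜] [Fintype ι] [∀ i, SeminormedAddCommGroup (E i)]
    [∀ i, NormedSpace 𝕜 (E i)] [SeminormedAddCommGroup F] [NormedSpace 𝕜 F]
    (f : ContinuousMultilinearMap 𝕜 E F) {κ : ι → Type*} (v : ∀ i, κ i → E i)
    (hv : ∀ i, Dense (Submodule.span 𝕜 (Set.range (v i)) : Set (E i))) (x : ∀ i, E i) :
    f x ∈ closure
      (Submodule.span 𝕜 (Set.range fun k : ∀ i, κ i => f fun i => v i (k i)) : Set F) := by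
  refine map_mem_closure f.cont ((dense_pi univ fun i _ => hv i) x) fun y hy => ?_
  exact f.toMultilinearMap.map_mem_span_range v fun i => hy i (mem_univ i)

theorem Submodule.eventually_mem_span_range_fin {R M ι : Type*} [Semiring R] [AddCommMonoid M]
    [Module R M] [Finite ι] {v : (ι → ℕ) → M} {y : M} (hy : y ∈ Submodule.span R (Set.range v)) :
    ∀ᶠ N in atTop, y ∈ Submodule.span R (Set.range fun k : ι → Fin N => v fun i => k i) := by
  induction hy using Submodule.span_induction with
  | mem x hx =>
    obtain ⟨k, rfl⟩ := hx
    filter_upwards [eventually_all.2 fun i => eventually_gt_atTop (k i)] with N hN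
    exact Submodule.subset_span ⟨fun i => ⟨k i, hN i⟩, rfl⟩
  | zero => exact Eventually.of_forall fun _ => zero_mem _
  | add x y _ _ hx hy => filter_upwards [hx, hy] with N hx hy using add_mem hx hy
  | smul a x _ hx => filter_upwards [hx] with N hx using Submodule.smul_mem _ a hx

theorem MvPolynomial.exists_forall_abs_sub_eval_lt {ι : Type*} {K : Set (ι → ℝ)}
    (hK : IsCompact K) {f : (ι → ℝ) → ℝ} (hf : Continuous f) {δ : ℝ} (hδ : 0 < δ) :
    ∃ q : MvPolynomial ι ℝ, ∀ x ∈ K, |f x - eval x q| < δ := by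
  let coord : ι → C(ι → ℝ, ℝ) := fun i => ⟨fun x => x i, continuous_apply i⟩
  have heval (q : MvPolynomial ι ℝ) (x : ι → ℝ) : aeval coord q x = eval x q := by
    induction q using MvPolynomial.induction_on <;> simp_all [coord]
  have hsep : (aeval coord).range.SeparatesPoints := fun x y hxy => by
    obtain ⟨i, hi⟩ := Function.ne_iff.1 hxy
    exact ⟨_, ⟨coord i, ⟨X i, aeval_X (R := ℝ) coord i⟩, rfl⟩, hi⟩
  obtain ⟨-, ⟨q, rfl⟩, hq⟩ :=
    ContinuousMap.exists_mem_subalgebra_near_continuous_of_isCompact_of_separatesPoints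
      hsep ⟨f, hf⟩ hK hδ
  exact ⟨q, fun x hx => by simpa [heval, abs_sub_comm] using hq x hx⟩

namespace MeasureTheory

theorem Lp.coeFn_finset_sum_smul {α E 𝕜 ι : Type*} {_ : MeasurableSpace α} {μ : Measure α}
    {p : ℝ≥0∞} [NormedAddCommGroup E] [NormedRing 𝕜] [Module 𝕜 E] [IsBoundedSMul 𝕜 E]
    (s : Finset ι) (c : ι → 𝕜) (f : ι → Lp E p μ) :
    ⇑(∑ i ∈ s, c i • f i) =ᵐ[μ] fun x => ∑ i ∈ s, c i • f i x := by
  classical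
  induction s using Finset.induction_on with
  | empty =>
    simp only [Finset.sum_empty]
    exact Lp.coeFn_zero E p μ
  | insert i s hi ih =>
    filter_upwards [Lp.coeFn_add (c i • f i) (∑ j ∈ s, c j • f j), Lp.coeFn_smul (c i) (f i), ih]
      with x h₁ h₂ h₃
    rw [Finset.sum_insert hi, Finset.sum_insert hi, h₁, Pi.add_apply, h₂, h₃, Pi.smul_apply]

section Tensor

variable {ι : Type*} [Fintype ι] {α : ι → Type*} [∀ i, MeasurableSpace (α i)]
  {μ : ∀ i, Measure (α i)} [∀ i, SigmaFinite (μ i)] {p : ℝ≥0∞} {f g : ∀ i, α i → ℝ}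

theorem ae_eq_pi_prod (h : ∀ i, f i =ᵐ[μ i] g i) :
    (fun x => ∏ i, f i (x i)) =ᵐ[Measure.pi μ] fun x => ∏ i, g i (x i) :=
  (ae_all_iff.2 fun i => Measure.tendsto_eval_ae_ae.eventually (h i)).mono fun _ hx =>
    Finset.prod_congr rfl fun i _ => hx i

theorem AEStronglyMeasurable.pi_prod (hf : ∀ i, AEStronglyMeasurable (f i) (μ i)) :
    AEStronglyMeasurable (fun x => ∏ i, f i (x i)) (Measure.pi μ) :=
  Finset.aestronglyMeasurable_fun_prod Finset.univ fun i _ =>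
    (hf i).comp_quasiMeasurePreserving (Measure.quasiMeasurePreserving_eval μ i)

theorem MemLp.pi_prod (hp0 : p ≠ 0) (hp : p ≠ ∞) (hf : ∀ i, MemLp (f i) p (μ i)) :
    MemLp (fun x => ∏ i, f i (x i)) p (Measure.pi μ) := by
  refine (integrable_norm_rpow_iff (.pi_prod fun i => (hf i).1) hp0 hp).1 ?_
  simp_rw [norm_prod, ← Real.finsetProd_rpow _ _ fun i _ => norm_nonneg _]
  exact Integrable.fintype_prod_dep fun i => (hf i).integrable_norm_rpow hp0 hp

theorem eLpNorm_pi_prod (hp0 : p ≠ 0) (hp : p ≠ ∞) (hf : ∀ i, MemLp (f i) p (μ i)) :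
    eLpNorm (fun x => ∏ i, f i (x i)) p (Measure.pi μ) = ∏ i, eLpNorm (f i) p (μ i) := by
  rw [(MemLp.pi_prod hp0 hp hf).eLpNorm_eq_integral_rpow_norm hp0 hp,
    Finset.prod_congr rfl fun i _ => (hf i).eLpNorm_eq_integral_rpow_norm hp0 hp]
  simp_rw [norm_prod, ← Real.finsetProd_rpow _ _ fun i _ => norm_nonneg _]
  rw [integral_fintype_prod_eq_prod (fun i t => ‖f i t‖ ^ p.toReal),
    ← Real.finsetProd_rpow _ _ fun i _ => integral_nonneg fun _ => by positivity,
    ENNReal.ofReal_prod_of_nonneg fun i _ => by positivity]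

theorem prod_update_apply_ae_eq [DecidableEq ι] (u : ∀ i, Lp ℝ p (μ i)) (i : ι)
    (v : Lp ℝ p (μ i)) {w : α i → ℝ} (hw : ⇑v =ᵐ[μ i] w) :
    (fun x => ∏ j, Function.update u i v j (x j)) =ᵐ[Measure.pi μ]
      fun x => w (x i) * ∏ j ∈ Finset.univ \ {i}, u j (x j) := by
  filter_upwards [Measure.tendsto_eval_ae_ae.eventually hw] with x hx
  simp only [Function.apply_update (fun j (g : Lp ℝ p (μ j)) => g (x j)),
    Finset.prod_update_of_mem (Finset.mem_univ i)]
  exact congrArg (· * _) hx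

variable [Fact (1 ≤ p)]

theorem Lp.memLp_pi_prod (hp : p ≠ ∞) (u : ∀ i, Lp ℝ p (μ i)) :
    MemLp (fun x => ∏ i, u i (x i)) p (Measure.pi μ) :=
  MemLp.pi_prod (one_pos.trans_le Fact.out).ne' hp fun i => Lp.memLp (u i)

noncomputable def tensorLp (hp : p ≠ ∞) :
    ContinuousMultilinearMap ℝ (fun i => Lp ℝ p (μ i)) (Lp ℝ p (Measure.pi μ)) :=
  MultilinearMap.mkContinuous
    { toFun := fun u => (Lp.memLp_pi_prod hp u).toLp _
      map_update_add' := fun u i v w => by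
        refine Lp.ext ((MemLp.coeFn_toLp _).trans ?_)
        refine .trans ?_ (Lp.coeFn_add _ _).symm
        filter_upwards [prod_update_apply_ae_eq u i _ (Lp.coeFn_add v w),
          prod_update_apply_ae_eq u i v .rfl, prod_update_apply_ae_eq u i w .rfl,
          MemLp.coeFn_toLp (Lp.memLp_pi_prod hp (Function.update u i v)),
          MemLp.coeFn_toLp (Lp.memLp_pi_prod hp (Function.update u i w))]
          with x h h₁ h₂ h₃ h₄
        simp only [Pi.add_apply] at h ⊢
        rw [h, h₃, h₄, h₁, h₂, add_mul]
      map_update_smul' := fun u i c v => by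
        refine Lp.ext ((MemLp.coeFn_toLp _).trans ?_)
        refine .trans ?_ (Lp.coeFn_smul _ _).symm
        filter_upwards [prod_update_apply_ae_eq u i _ (Lp.coeFn_smul c v),
          prod_update_apply_ae_eq u i v .rfl,
          MemLp.coeFn_toLp (Lp.memLp_pi_prod hp (Function.update u i v))]
          with x h h₁ h₂
        simp only [Pi.smul_apply, smul_eq_mul] at h ⊢
        rw [h, h₂, h₁, mul_assoc] }
    1 fun u => by
      rw [one_mul, MultilinearMap.coe_mk, Lp.norm_toLp,
        eLpNorm_pi_prod (one_pos.trans_le Fact.out).ne' hp fun i => Lp.memLp (u i),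
        ENNReal.toReal_prod]
      rfl

theorem coeFn_tensorLp (hp : p ≠ ∞) (u : ∀ i, Lp ℝ p (μ i)) :
    tensorLp hp u =ᵐ[Measure.pi μ] fun x => ∏ i, u i (x i) :=
  MemLp.coeFn_toLp (Lp.memLp_pi_prod hp u)

theorem coeFn_tensorLp_toLp (hp : p ≠ ∞) (hf : ∀ i, MemLp (f i) p (μ i)) :
    tensorLp hp (fun i => (hf i).toLp (f i)) =ᵐ[Measure.pi μ] fun x => ∏ i, f i (x i) :=
  (coeFn_tensorLp hp _).trans (ae_eq_pi_prod fun i => MemLp.coeFn_toLp (hf i))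

theorem coeFn_finset_sum_smul_tensorLp_toLp {β : Type*} (hp : p ≠ ∞) (s : Finset β) (c : β → ℝ)
    {F : β → ∀ i, α i → ℝ} (hF : ∀ b i, MemLp (F b i) p (μ i)) :
    ⇑(∑ b ∈ s, c b • tensorLp hp fun i => (hF b i).toLp (F b i)) =ᵐ[Measure.pi μ]
      fun x => ∑ b ∈ s, c b * ∏ i, F b i (x i) := by
  filter_upwards [Lp.coeFn_finset_sum_smul s c fun b => tensorLp hp fun i => (hF b i).toLp (F b i),
    (eventually_all_finset s).2 fun b _ => coeFn_tensorLp_toLp hp (hF b)] with x h₁ h₂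
  rw [h₁]
  exact Finset.sum_congr rfl fun b hb => by rw [h₂ b hb, smul_eq_mul]

end Tensor

theorem MemLp.exists_mvPolynomial_eLpNorm_sub_lt {ι : Type*} [Fintype ι]
    {μ : Measure (ι → ℝ)} [IsFiniteMeasure μ] {K : Set (ι → ℝ)} (hK : IsCompact K)
    (hμK : ∀ᵐ x ∂μ, x ∈ K) {p : ℝ≥0∞} (hp1 : 1 ≤ p) (hp : p ≠ ∞) {g : (ι → ℝ) → ℝ}
    (hg : MemLp g p μ) {ε : ℝ≥0∞} (hε : ε ≠ 0) :
    ∃ q : MvPolynomial ι ℝ, eLpNorm (g - fun x => MvPolynomial.eval x q) p μ < ε := by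
  obtain ⟨b, hgb, hb⟩ := hg.exists_boundedContinuous_eLpNorm_sub_le hp (ENNReal.half_pos hε).ne'
  obtain ⟨δ, hδ, hMδ⟩ : ∃ δ > 0, μ univ ^ p.toReal⁻¹ * ENNReal.ofReal δ < ε / 2 := by
    have hM : μ univ ^ p.toReal⁻¹ ≠ ∞ :=
      ENNReal.rpow_ne_top_of_nonneg (by positivity) (measure_ne_top μ univ)
    obtain ⟨δ, -, hδ, hδε⟩ := ENNReal.lt_iff_exists_real_btwn.1
      (ENNReal.div_pos_iff.2 ⟨(ENNReal.half_pos hε).ne', hM⟩)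
    exact ⟨δ, ENNReal.ofReal_pos.1 hδ, ENNReal.mul_lt_of_lt_div' hδε⟩
  obtain ⟨q, hq⟩ := MvPolynomial.exists_forall_abs_sub_eval_lt hK b.continuous hδ
  have hbq : eLpNorm (⇑b - fun x => MvPolynomial.eval x q) p μ < ε / 2 :=
    (eLpNorm_le_of_ae_bound (hμK.mono fun x hx => (hq x hx).le)).trans_lt hMδ
  refine ⟨q, ?_⟩
  calc eLpNorm (g - fun x => MvPolynomial.eval x q) p μ
      = eLpNorm ((g - ⇑b) + (⇑b - fun x => MvPolynomial.eval x q)) p μ := by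
        rw [sub_add_sub_cancel]
    _ ≤ eLpNorm (g - ⇑b) p μ + eLpNorm (⇑b - fun x => MvPolynomial.eval x q) p μ :=
        eLpNorm_add_le (hg.1.sub b.continuous.aestronglyMeasurable)
          (b.continuous.sub (MvPolynomial.continuous_eval q)).aestronglyMeasurable hp1
    _ < ε / 2 + ε / 2 := ENNReal.add_lt_add_of_le_of_lt (hg.sub hb).eLpNorm_ne_top hgb hbq
    _ = ε := ENNReal.add_halves ε

section CompactSupport

variable {ι : Type*} [Fintype ι] {μ : ι → Measure ℝ} [∀ i, IsFiniteMeasure (μ i)]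
  {K : ι → Set ℝ} {p : ℝ≥0∞} [Fact (1 ≤ p)]

theorem dense_span_range_tensorLp (hK : ∀ i, IsCompact (K i)) (hμK : ∀ i, ∀ᵐ t ∂μ i, t ∈ K i)
    (hp : p ≠ ∞) :
    Dense (Submodule.span ℝ (range (tensorLp hp (μ := μ))) : Set (Lp ℝ p (Measure.pi μ))) := by
  refine fun g => EMetric.mem_closure_iff.2 fun ε hε => ?_
  have hμK' : ∀ᵐ x ∂Measure.pi μ, x ∈ univ.pi K :=
    (ae_all_iff.2 fun i => Measure.tendsto_eval_ae_ae.eventually (hμK i)).mono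
      fun x hx => mem_univ_pi.2 hx
  obtain ⟨q, hq⟩ := (Lp.memLp g).exists_mvPolynomial_eLpNorm_sub_lt (isCompact_univ_pi hK) hμK'
    Fact.out hp hε.ne'
  have hpow (i : ι) (j : ℕ) : MemLp (fun t : ℝ => t ^ j) p (μ i) := by
    obtain ⟨C, hC⟩ := (hK i).exists_bound_of_continuousOn (continuous_pow j).continuousOn
    exact .of_bound (continuous_pow j).aestronglyMeasurable C ((hμK i).mono hC)
  refine ⟨∑ m ∈ q.support, q.coeff m • tensorLp hp fun i => (hpow i (m i)).toLp _,
    Submodule.sum_mem _ fun m _ => Submodule.smul_mem _ _ (Submodule.subset_span ⟨_, rfl⟩), ?_⟩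
  rw [Lp.edist_def]
  refine (eLpNorm_congr_ae (EventuallyEq.rfl.sub ?_)).trans_lt hq
  filter_upwards [coeFn_finset_sum_smul_tensorLp_toLp hp q.support q.coeff
    fun m i => hpow i (m i)] with x hx
  rw [hx, MvPolynomial.eval_eq']

theorem dense_span_range_tensorLp_of_dense (hK : ∀ i, IsCompact (K i))
    (hμK : ∀ i, ∀ᵐ t ∂μ i, t ∈ K i) (hp : p ≠ ∞) {κ : ι → Type*} (v : ∀ i, κ i → Lp ℝ p (μ i))
    (hv : ∀ i, Dense (Submodule.span ℝ (range (v i)) : Set (Lp ℝ p (μ i)))) :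
    Dense (Submodule.span ℝ (range fun k : ∀ i, κ i => tensorLp hp fun i => v i (k i)) :
      Set (Lp ℝ p (Measure.pi μ))) := by
  rw [← dense_closure, ← Submodule.topologicalClosure_coe]
  refine (dense_span_range_tensorLp hK hμK hp).mono (Submodule.span_le.2 ?_)
  rintro _ ⟨u, rfl⟩
  exact (tensorLp hp).map_mem_closure_span_range v hv u

end CompactSupport

theorem volume_restrict_Icc_eq_pi {ι : Type*} [Fintype ι] (a b : ι → ℝ) :
    volume.restrict (Icc a b) = Measure.pi fun i => volume.restrict (Icc (a i) (b i)) := by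
  rw [← pi_univ_Icc, volume_pi, Measure.restrict_pi_pi]

end MeasureTheory

theorem futon_universal_approximation_general
    (C D : ℕ) (hC : 1 ≤ C)
    (φ : ℕ → ℝ → ℝ)
    (hmem : ∀ k : ℕ, MemLp (φ k) 2 (volume.restrict (Set.Icc (0 : ℝ) 1)))
    (hdense : Dense
      ((Submodule.span ℝ (Set.range fun k : ℕ => (hmem k).toLp (φ k)) :
        Submodule ℝ (Lp ℝ 2 (volume.restrict (Set.Icc (0 : ℝ) 1)))) :
        Set (Lp ℝ 2 (volume.restrict (Set.Icc (0 : ℝ) 1)))))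
    (s : Fin D → (Fin C → ℝ) → ℝ)
    (hs : ∀ d : Fin D, MemLp (s d) 2 (volume.restrict (Set.Icc (0 : Fin C → ℝ) 1)))
    (ε : ℝ) (hε : 0 < ε) :
    ∃ (K R : ℕ), R ≤ K ^ (C - 1) * min K D ∧
      ∃ (U : Fin C → Fin K → Fin R → ℝ) (V : Fin D → Fin R → ℝ),
        ∀ d : Fin D,
          eLpNorm (fun x : Fin C → ℝ =>
              s d x - ∑ r : Fin R, V d r * ∏ c : Fin C,
                (∑ k : Fin K, U c k r * φ (↑k) (x c))) 2
            (volume.restrict (Set.Icc (0 : Fin C → ℝ) 1))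
          < ENNReal.ofReal ε := by
  obtain ⟨n, rfl⟩ := Nat.exists_eq_add_of_le' hC
  rw [show volume.restrict (Icc (0 : Fin (n + 1) → ℝ) 1) =
    Measure.pi fun _ => volume.restrict (Icc (0 : ℝ) 1) from volume_restrict_Icc_eq_pi 0 1] at hs ⊢
  have hp : (2 : ℝ≥0∞) ≠ ∞ := ENNReal.ofNat_ne_top
  have hdense' := dense_span_range_tensorLp_of_dense (fun _ : Fin (n + 1) => isCompact_Icc)
    (fun _ => ae_restrict_mem measurableSet_Icc) hp (fun _ k => (hmem k).toLp (φ k))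
    fun _ => hdense
  choose y hy hsy using fun d => hdense'.exists_dist_lt ((hs d).toLp (s d)) hε
  obtain ⟨K, hDK, hyK⟩ : ∃ K, D ≤ K ∧ ∀ d, y d ∈ Submodule.span ℝ
      (range fun κ : Fin (n + 1) → Fin K => tensorLp hp fun c => (hmem (κ c)).toLp (φ (κ c))) :=
    ((eventually_ge_atTop D).and
      (eventually_all.2 fun d => Submodule.eventually_mem_span_range_fin (hy d))).exists
  choose T hT using fun d => (Submodule.mem_span_range_iff_exists_fun ℝ).1 (hyK d)
  obtain ⟨U, V, hUV⟩ := exists_sum_mul_prod_sum_eq_sum_mul_prod T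
  refine ⟨K, _, by simp [min_eq_right hDK], U, V, fun d => ?_⟩
  have hfuton : (fun x : Fin (n + 1) → ℝ => ∑ r, V d r * ∏ c, ∑ k : Fin K, U c k r * φ k (x c))
      =ᵐ[Measure.pi fun _ => volume.restrict (Icc (0 : ℝ) 1)] y d := by
    rw [← hT d]
    filter_upwards [coeFn_finset_sum_smul_tensorLp_toLp hp Finset.univ (T d)
      fun (κ : Fin (n + 1) → Fin K) c => hmem (κ c)] with x hx
    rw [hx]
    exact hUV d fun c k => φ k (x c)
  refine (eLpNorm_congr_ae ((MemLp.coeFn_toLp (hs d)).symm.sub hfuton)).trans_lt ?_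
  rw [← Lp.edist_def]
  exact edist_lt_ofReal.2 (hsy d)

/-- **Universal Approximation for FUTON.** Let `{φ_k}` be an orthonormal basis of
`L²([0,1])` and `s_1, …, s_D ∈ L²([0,1]^C)`. For every `ε > 0` there exist a
resolution `K`, a rank `R ≤ K^{C−1}·min{K,D}`, factor matrices
`U^{(c)} ∈ ℝ^{K×R}` and `V ∈ ℝ^{D×R}` such that the FUTON function
`s^futon_d(x) = Σ_r V_{d,r} ∏_c (Σ_k U^{(c)}_{k,r} φ_k(x_c))` satisfies
`‖s_d − s^futon_d‖_{L²([0,1]^C)} < ε` for every `d`. -/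
theorem futon_universal_approximation
    (C D : ℕ) (hC : 1 ≤ C) (hD : 1 ≤ D)
    (φ : ℕ → ℝ → ℝ)
    (hmem : ∀ k : ℕ, MemLp (φ k) 2 (volume.restrict (Set.Icc (0 : ℝ) 1)))
    (horth : ∀ k l : ℕ,
      ∫ x in Set.Icc (0 : ℝ) 1, φ k x * φ l x = if k = l then 1 else 0)
    (hdense : Dense
      ((Submodule.span ℝ (Set.range fun k : ℕ => (hmem k).toLp (φ k)) :
        Submodule ℝ (Lp ℝ 2 (volume.restrict (Set.Icc (0 : ℝ) 1)))) :
        Set (Lp ℝ 2 (volume.restrict (Set.Icc (0 : ℝ) 1)))))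
    (s : Fin D → (Fin C → ℝ) → ℝ)
    (hs : ∀ d : Fin D, MemLp (s d) 2 (volume.restrict (Set.Icc (0 : Fin C → ℝ) 1)))
    (ε : ℝ) (hε : 0 < ε) :
    ∃ (K R : ℕ), R ≤ K ^ (C - 1) * min K D ∧
      ∃ (U : Fin C → Fin K → Fin R → ℝ) (V : Fin D → Fin R → ℝ),
        ∀ d : Fin D,
          eLpNorm (fun x : Fin C → ℝ =>
              s d x - ∑ r : Fin R, V d r * ∏ c : Fin C,
                (∑ k : Fin K, U c k r * φ (↑k) (x c))) 2
            (volume.restrict (Set.Icc (0 : Fin C → ℝ) 1))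
          < ENNReal.ofReal ε :=
  futon_universal_approximation_general C D hC φ hmem hdense s hs ε hε
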